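/- For any symmetric nonnegative matrix X ∈ ℝ^{R×R}, positive vector b ∈ ℝ^R, and any v ∈ ℝ^R, the identity ∑_r v_r² (Xb)_r / b_r − ∑_{r,s} v_r v_s x_{rs} = (1/2) ∑_{r,s} x_{rs} (√(b_s/b_r) v_r − √(b_r/b_s) v_s)² holds. -/
import Mathlib


open Matrix

theorem stmt_2 (R : ℕ) (X : Matrix (Fin R) (Fin R) ℝ)
    (hX : X.IsSymm) (hXnn : ∀ r s, 0 ≤ X r s)
    (b : Fin R → ℝ) (hb : ∀ r, 0 < b r)
    (v : Fin R → ℝ) :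
    (∑ r, v r ^ 2 * X.mulVec b r / b r) - ∑ r, ∑ s, v r * v s * X r s =
      (1 / 2) * ∑ r, ∑ s, X r s *
        (Real.sqrt (b s / b r) * v r - Real.sqrt (b r / b s) * v s) ^ 2 := by
  have key : ∀ r s, (Real.sqrt (b s / b r) * v r - Real.sqrt (b r / b s) * v s) ^ 2
      = b s / b r * v r ^ 2 + b r / b s * v s ^ 2 - 2 * (v r * v s) := by
    intro r s
    have h1 : Real.sqrt (b s / b r) ^ 2 = b s / b r :=
      Real.sq_sqrt (div_nonneg (hb s).le (hb r).le)
    have h2 : Real.sqrt (b r / b s) ^ 2 = b r / b s :=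
      Real.sq_sqrt (div_nonneg (hb r).le (hb s).le)
    have h3 : Real.sqrt (b s / b r) * Real.sqrt (b r / b s) = 1 := by
      rw [← Real.sqrt_mul (div_nonneg (hb s).le (hb r).le), div_mul_div_comm,
        mul_comm (b s) (b r), div_self (mul_pos (hb r) (hb s)).ne', Real.sqrt_one]
    linear_combination v r ^ 2 * h1 + v s ^ 2 * h2 - 2 * v r * v s * h3
  have hmv : ∀ r, v r ^ 2 * X.mulVec b r / b r = ∑ s, X r s * (b s / b r * v r ^ 2) := by
    intro r
    rw [Matrix.mulVec, dotProduct, Finset.mul_sum, Finset.sum_div]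
    exact Finset.sum_congr rfl fun s _ => by ring
  have swap : ∑ r, ∑ s, X r s * (b r / b s * v s ^ 2)
      = ∑ r, ∑ s, X r s * (b s / b r * v r ^ 2) := by
    rw [Finset.sum_comm]
    exact Finset.sum_congr rfl fun r _ => Finset.sum_congr rfl fun s _ => by
      rw [hX.apply]
  have expand : ∀ r s : Fin R, X r s * (b s / b r * v r ^ 2 + b r / b s * v s ^ 2 - 2 * (v r * v s))
      = X r s * (b s / b r * v r ^ 2) + X r s * (b r / b s * v s ^ 2)
        - 2 * (v r * v s * X r s) := by
    intro r s; ring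
  simp only [hmv, key, expand, Finset.sum_sub_distrib, Finset.sum_add_distrib,
    ← Finset.mul_sum]
  rw [swap]
  ring
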